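/- arXiv:1903.11536 — 2 statements merged into one kernel-verified Lean document; each statement's English description precedes it below -/
import Mathlib

section
/- Suppose the well-posedness inequality ‖u‖_{WP} ≤ C_{WP}·sup_{λ∈Λ}|λ(u)| holds for all u ∈ H, where ‖·‖_{WP} is a (semi)norm on H. Let Λ_N ⊆ Λ be finite, σ_{Λ_N} = sup_{λ∈Λ} dist(λ, span Λ_N)_{H*}, and let ũ_N be the orthogonal projection of u onto the span of the Riesz representers of Λ_N. Then ‖u − ũ_N‖_{WP} ≤ C_{WP}·σ_{Λ_N}·‖u‖_H. -/
/-! The error `w = u - ũ_N` is orthogonal to the Riesz representers, so every `μ ∈ span Λ_N`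
annihilates it and `|λ w| = |(λ - μ) w| ≤ ‖λ - μ‖ ‖w‖`; moreover `‖w‖ ≤ ‖u‖` by Pythagoras.
Taking the supremum over `λ ∈ Λ` and applying well-posedness to `w` gives the bound. If `Λ` is not
norm-bounded, the real suprema may take the junk value `0`, but then well-posedness forces
`p = 0` through Banach–Steinhaus. -/

open NormedSpace Metric
open Set

section PointwiseBounded

variable {E : Type*} [NormedAddCommGroup E] [NormedSpace ℝ E] {ι : Type*}

lemma bddAbove_range_abs_apply_add (f : ι → StrongDual ℝ E) {x y : E}
    (hx : BddAbove (range fun i => |f i x|)) (hy : BddAbove (range fun i => |f i y|)) :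
    BddAbove (range fun i => |f i (x + y)|) := by
  obtain ⟨Mx, hMx⟩ := hx
  obtain ⟨My, hMy⟩ := hy
  refine ⟨Mx + My, ?_⟩
  rintro _ ⟨i, rfl⟩
  calc |f i (x + y)| ≤ |f i x| + |f i y| := by rw [map_add]; exact abs_add_le _ _
    _ ≤ Mx + My := add_le_add (hMx ⟨i, rfl⟩) (hMy ⟨i, rfl⟩)

lemma bddAbove_range_abs_apply_neg_iff (f : ι → StrongDual ℝ E) {x : E} :
    BddAbove (range fun i => |f i (-x)|) ↔ BddAbove (range fun i => |f i x|) := by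
  simp only [map_neg, abs_neg]

lemma not_bddAbove_range_abs_apply_add_of_bddAbove (f : ι → StrongDual ℝ E) {x x₀ : E}
    (hx : BddAbove (range fun i => |f i x|)) (hx₀ : ¬ BddAbove (range fun i => |f i x₀|)) :
    ¬ BddAbove (range fun i => |f i (x + x₀)|) := fun h => hx₀ <| by
  simpa using bddAbove_range_abs_apply_add f h ((bddAbove_range_abs_apply_neg_iff f).2 hx)

end PointwiseBounded

/-- Where `⨆ i, |f i x|` is unbounded it is the junk value `0`, forcing `p x = 0`. Banach–Steinhaus
provides one such point `x₀`, and every other `x` is the midpoint of two such points `x ± x₀`. -/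
theorem Seminorm.eq_zero_of_le_mul_iSup_abs_of_not_bddAbove
    {E : Type*} [NormedAddCommGroup E] [NormedSpace ℝ E] [CompleteSpace E] {ι : Type*}
    (f : ι → StrongDual ℝ E) (p : Seminorm ℝ E) (C : ℝ) (hp : ∀ x, p x ≤ C * ⨆ i, |f i x|)
    (hf : ¬ BddAbove (range fun i => ‖f i‖)) (x : E) : p x = 0 := by
  have hzero : ∀ y, ¬ BddAbove (range fun i => |f i y|) → p y = 0 := fun y hy =>
    le_antisymm (by simpa [Real.iSup_of_not_bddAbove hy] using hp y) (apply_nonneg p y)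
  obtain ⟨x₀, hx₀⟩ : ∃ x₀, ¬ BddAbove (range fun i => |f i x₀|) := by
    by_contra! h
    exact hf <| by
      simpa [bddAbove_def, forall_mem_range] using
        banach_steinhaus (g := f) fun x => by simpa [bddAbove_def, forall_mem_range] using h x
  by_cases hx : BddAbove (range fun i => |f i x|)
  · have hplus := hzero _ (not_bddAbove_range_abs_apply_add_of_bddAbove f hx hx₀)
    have hminus := hzero _ (not_bddAbove_range_abs_apply_add_of_bddAbove f hx
      ((bddAbove_range_abs_apply_neg_iff f).not.2 hx₀))
    have h2x : p ((x + x₀) + (x + -x₀)) = 2 * p x := by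
      rw [show (x + x₀) + (x + -x₀) = (2 : ℝ) • x by module, map_smul_eq_mul]
      norm_num
    have := map_add_le_add p (x + x₀) (x + -x₀)
    linarith [apply_nonneg p x]
  · exact hzero x hx

section Annihilator

variable {E : Type*} [NormedAddCommGroup E] [NormedSpace ℝ E]

lemma abs_apply_le_infDist_mul_norm {S : Submodule ℝ (StrongDual ℝ E)} {w : E}
    (hS : ∀ μ ∈ S, μ w = 0) (l : StrongDual ℝ E) : |l w| ≤ infDist l S * ‖w‖ := by
  rcases (norm_nonneg w).eq_or_lt with hw | hw
  · simp [norm_eq_zero.1 hw.symm]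
  rw [← div_le_iff₀ hw, le_infDist ⟨0, S.zero_mem⟩]
  intro μ hμ
  rw [div_le_iff₀ hw, dist_eq_norm]
  calc |l w| = |(l - μ) w| := by simp [hS μ hμ]
    _ ≤ ‖l - μ‖ * ‖w‖ := (l - μ).le_opNorm w

lemma iSup_abs_apply_le_iSup_infDist_mul {ι : Type*} (f : ι → StrongDual ℝ E)
    {S : Submodule ℝ (StrongDual ℝ E)} {w : E} (hS : ∀ μ ∈ S, μ w = 0) {r : ℝ} (hwr : ‖w‖ ≤ r)
    (hf : BddAbove (range fun i => infDist (f i) S)) :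
    ⨆ i, |f i w| ≤ (⨆ i, infDist (f i) S) * r := by
  have hσ : 0 ≤ ⨆ i, infDist (f i) S := Real.iSup_nonneg fun _ => infDist_nonneg
  refine Real.iSup_le (fun i => ?_) (mul_nonneg hσ ((norm_nonneg w).trans hwr))
  calc |f i w| ≤ infDist (f i) S * ‖w‖ := abs_apply_le_infDist_mul_norm hS (f i)
    _ ≤ (⨆ i, infDist (f i) S) * r := by gcongr; exact le_ciSup hf i

lemma bddAbove_range_infDist_of_bddAbove_norm {ι : Type*} (f : ι → StrongDual ℝ E)
    (S : Submodule ℝ (StrongDual ℝ E)) (hf : BddAbove (range fun i => ‖f i‖)) :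
    BddAbove (range fun i => infDist (f i) S) := by
  obtain ⟨M, hM⟩ := hf
  refine ⟨M, ?_⟩
  rintro _ ⟨i, rfl⟩
  calc infDist (f i) S ≤ dist (f i) 0 := infDist_le_dist_of_mem S.zero_mem
    _ = ‖f i‖ := dist_zero_right _
    _ ≤ M := hM ⟨i, rfl⟩

end Annihilator

lemma apply_eq_zero_of_mem_span_of_inner_eq_zero
    {H : Type*} [NormedAddCommGroup H] [InnerProductSpace ℝ H] [CompleteSpace H] {N : ℕ} {lam : Fin N → StrongDual ℝ H}
    {v : Fin N → H} (hv : ∀ j, v j = (InnerProductSpace.toDual ℝ H).symm (lam j)) {w : H}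
    (horth : ∀ j, inner ℝ w (v j) = (0 : ℝ)) {μ : StrongDual ℝ H}
    (hμ : μ ∈ Submodule.span ℝ (range lam)) : μ w = 0 := by
  suffices Submodule.span ℝ (range lam) ≤
      LinearMap.ker ((ContinuousLinearMap.apply ℝ ℝ w : StrongDual ℝ H →L[ℝ] ℝ) :
        StrongDual ℝ H →ₗ[ℝ] ℝ) from this hμ
  rw [Submodule.span_le]
  rintro _ ⟨j, rfl⟩
  have hj := horth j
  rwa [hv j, real_inner_comm, InnerProductSpace.toDual_symm_apply] at hj

lemma norm_sub_le_norm_of_inner_eq_zero {F : Type*} [NormedAddCommGroup F]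
    [InnerProductSpace ℝ F] {u uN : F} (h : inner ℝ (u - uN) uN = (0 : ℝ)) : ‖u - uN‖ ≤ ‖u‖ := by
  have hpyth := norm_add_sq_eq_norm_sq_add_norm_sq_real h
  rw [sub_add_cancel] at hpyth
  exact (mul_self_le_mul_self_iff (norm_nonneg _) (norm_nonneg _)).2
    (hpyth ▸ le_add_of_nonneg_right (mul_self_nonneg _))

theorem wellposed_error_bound_general
    {H : Type*} [NormedAddCommGroup H] [InnerProductSpace ℝ H] [CompleteSpace H]
    (Λ : Set (StrongDual ℝ H)) (p : Seminorm ℝ H) (C : ℝ) (hC : 0 < C)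
    (hWP : ∀ u : H, p u ≤ C * ⨆ l : Λ, |(l : StrongDual ℝ H) u|)
    {N : ℕ} (lam : Fin N → StrongDual ℝ H)
    (v : Fin N → H) (hv : ∀ j, v j = (InnerProductSpace.toDual ℝ H).symm (lam j))
    (u uN : H)
    (hmem : uN ∈ Submodule.span ℝ (Set.range v))
    (horth : ∀ w ∈ Submodule.span ℝ (Set.range v), inner ℝ (u - uN) w = (0 : ℝ)) :
    p (u - uN) ≤
      C * (⨆ l : Λ, infDist (l : StrongDual ℝ H)
            ((Submodule.span ℝ (Set.range lam) : Submodule ℝ (StrongDual ℝ H)) : Set (StrongDual ℝ H)))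
        * ‖u‖ := by
  have hann : ∀ μ ∈ Submodule.span ℝ (range lam), μ (u - uN) = 0 := fun μ =>
    apply_eq_zero_of_mem_span_of_inner_eq_zero hv fun j => horth _ (Submodule.subset_span ⟨j, rfl⟩)
  by_cases hΛ : BddAbove (range fun l : Λ => ‖(l : StrongDual ℝ H)‖)
  · calc p (u - uN) ≤ C * ⨆ l : Λ, |(l : StrongDual ℝ H) (u - uN)| := hWP _
      _ ≤ C * ((⨆ l : Λ, infDist (l : StrongDual ℝ H) (Submodule.span ℝ (range lam))) * ‖u‖) := by
        gcongr
        exact iSup_abs_apply_le_iSup_infDist_mul _ hann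
          (norm_sub_le_norm_of_inner_eq_zero (horth uN hmem))
          (bddAbove_range_infDist_of_bddAbove_norm _ _ hΛ)
      _ = _ := by ring
  · rw [Seminorm.eq_zero_of_le_mul_iSup_abs_of_not_bddAbove _ p C hWP hΛ]
    have hσ : 0 ≤ ⨆ l : Λ, infDist (l : StrongDual ℝ H) (Submodule.span ℝ (range lam)) :=
      Real.iSup_nonneg fun _ => infDist_nonneg
    positivity

/-- Lemma "sigma": the well-posedness error bound
`‖u − ũ_N‖_{WP} ≤ C_{WP} σ_{Λ_N} ‖u‖`. -/
theorem wellposed_error_bound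
    {H : Type*} [NormedAddCommGroup H] [InnerProductSpace ℝ H] [CompleteSpace H]
    (Λ : Set (StrongDual ℝ H)) (p : Seminorm ℝ H) (C : ℝ) (hC : 0 < C)
    (hWP : ∀ u : H, p u ≤ C * ⨆ l : Λ, |(l : StrongDual ℝ H) u|)
    {N : ℕ} (lam : Fin N → StrongDual ℝ H) (hsub : Set.range lam ⊆ Λ)
    (v : Fin N → H) (hv : ∀ j, v j = (InnerProductSpace.toDual ℝ H).symm (lam j))
    (u uN : H)
    (hmem : uN ∈ Submodule.span ℝ (Set.range v))
    (horth : ∀ w ∈ Submodule.span ℝ (Set.range v), inner ℝ (u - uN) w = (0 : ℝ)) :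
    p (u - uN) ≤
      C * (⨆ l : Λ, infDist (l : StrongDual ℝ H)
            ((Submodule.span ℝ (Set.range lam) : Submodule ℝ (StrongDual ℝ H)) : Set (StrongDual ℝ H)))
        * ‖u‖ :=
  wellposed_error_bound_general Λ p C hC hWP lam v hv u uN hmem horth
end

section
/- (Lemma rho–sigma) Assume ‖u‖_{WP} = sup_{μ∈M}|μ(u)| for a compact set M ⊆ H*, and the well-posedness inequality ‖u‖_{WP} ≤ C_{WP}·sup_{λ∈Λ}|λ(u)| for all u ∈ H. Then for any finite Λ_N ⊆ Λ, ρ_{M,Λ_N} := max_{μ∈M} dist(μ, span Λ_N)_{H*} ≤ C_{WP}·σ_{Λ_N}, where σ_{Λ_N} = sup_{λ∈Λ} dist(λ, span Λ_N)_{H*}. -/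
/-!
Via the Riesz map, `span Λ_N` is the image of a finite-dimensional subspace `K ⊆ H`, and the
distance from a functional to it is the norm of its restriction to `Kᗮ`. Restricted to `Kᗮ`, each
`μ ∈ M` still satisfies `|μ u| ≤ C sup_λ |λ u|`, so its norm is at most `C` times the supremum of
the norms of the restricted `λ`.
-/

open Metric InnerProductSpace Set

section PointwiseBounded

variable {ι E F 𝓕 : Type*} [SeminormedAddCommGroup E] [SeminormedAddCommGroup F]
  [FunLike 𝓕 E F] [AddMonoidHomClass 𝓕 E F]

def pointwiseBoundedSubgroup (g : ι → 𝓕) : AddSubgroup E where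
  carrier := {x | BddAbove (range fun i => ‖g i x‖)}
  zero_mem' := by simpa using bddAbove_singleton.mono range_const_subset
  add_mem' := by
    rintro x y ⟨a, ha⟩ ⟨b, hb⟩
    refine ⟨a + b, forall_mem_range.2 fun i => ?_⟩
    rw [map_add]
    exact (norm_add_le _ _).trans (add_le_add (ha ⟨i, rfl⟩) (hb ⟨i, rfl⟩))
  neg_mem' := by simp

end PointwiseBounded

theorem AddSubgroup.apply_eq_zero_of_forall_notMem {E F 𝓕 : Type*} [AddGroup E] [AddGroup F]
    [FunLike 𝓕 E F] [AddMonoidHomClass 𝓕 E F] (B : AddSubgroup E) {v : E} (hv : v ∉ B)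
    {φ : 𝓕} (h : ∀ x ∉ B, φ x = 0) (x : E) : φ x = 0 := by
  by_cases hx : x ∈ B
  · have hxv : x + v ∉ B := fun hxv => hv <| by
      simpa only [neg_add_cancel_left] using B.add_mem (B.neg_mem hx) hxv
    simpa [h v hv] using h _ hxv
  · exact h x hx

/-- The bound survives the convention `⨆ i, a i = 0` for unbounded `a`: if `g` is unbounded in
norm, Banach–Steinhaus makes `pointwiseBoundedSubgroup g` proper, and `φ` vanishes off it. -/
theorem ContinuousLinearMap.norm_le_mul_iSup_norm_of_le_mul_iSup
    {𝕜 ι E F G : Type*} [NontriviallyNormedField 𝕜]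
    [NormedAddCommGroup E] [NormedSpace 𝕜 E] [CompleteSpace E]
    [NormedAddCommGroup F] [NormedSpace 𝕜 F] [NormedAddCommGroup G] [NormedSpace 𝕜 G]
    (g : ι → E →L[𝕜] F) (φ : E →L[𝕜] G) {C : ℝ} (hC : 0 ≤ C)
    (h : ∀ x, ‖φ x‖ ≤ C * ⨆ i, ‖g i x‖) : ‖φ‖ ≤ C * ⨆ i, ‖g i‖ := by
  by_cases hb : BddAbove (range fun i => ‖g i‖)
  · have hS : 0 ≤ ⨆ i, ‖g i‖ := Real.iSup_nonneg fun _ => norm_nonneg _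
    refine φ.opNorm_le_bound (mul_nonneg hC hS) fun x => (h x).trans ?_
    have hgx : ⨆ i, ‖g i x‖ ≤ (⨆ i, ‖g i‖) * ‖x‖ :=
      Real.iSup_le (fun i => (g i).le_opNorm x |>.trans (by gcongr; exact le_ciSup hb i))
        (by positivity)
    calc C * ⨆ i, ‖g i x‖ ≤ C * ((⨆ i, ‖g i‖) * ‖x‖) := by gcongr
      _ = C * (⨆ i, ‖g i‖) * ‖x‖ := by ring
  · rw [Real.iSup_of_not_bddAbove hb, mul_zero]
    obtain ⟨v, hv⟩ : ∃ v, v ∉ pointwiseBoundedSubgroup g := by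
      by_contra! hall
      obtain ⟨C', hC'⟩ := banach_steinhaus fun x =>
        let ⟨c, hc⟩ := hall x
        ⟨c, fun i => hc ⟨i, rfl⟩⟩
      exact hb ⟨C', forall_mem_range.2 hC'⟩
    have hφ : ∀ x ∉ pointwiseBoundedSubgroup g, φ x = 0 := fun x hx =>
      norm_le_zero_iff.1 (by simpa [Real.iSup_of_not_bddAbove hx] using h x)
    exact φ.opNorm_le_bound le_rfl fun x => by
      simp [AddSubgroup.apply_eq_zero_of_forall_notMem _ hv hφ x]

theorem Bornology.IsBounded.norm_apply_le_iSup {𝕜 E F : Type*} [NontriviallyNormedField 𝕜]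
    [NormedAddCommGroup E] [NormedSpace 𝕜 E] [NormedAddCommGroup F] [NormedSpace 𝕜 F]
    {M : Set (E →L[𝕜] F)} (hM : Bornology.IsBounded M) {μ : E →L[𝕜] F} (hμ : μ ∈ M) (x : E) :
    ‖μ x‖ ≤ ⨆ ν : M, ‖(ν : E →L[𝕜] F) x‖ := by
  obtain ⟨R, hR⟩ := hM.exists_norm_le
  refine le_ciSup (f := fun ν : M => ‖(ν : E →L[𝕜] F) x‖) ⟨R * ‖x‖, forall_mem_range.2 fun ν => ?_⟩ (⟨μ, hμ⟩ : M)
  exact (ν.1.le_opNorm x).trans (by gcongr; exact hR _ ν.2)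

section Dual

variable {𝕜 E : Type*} [RCLike 𝕜] [NormedAddCommGroup E] [InnerProductSpace 𝕜 E] [CompleteSpace E]

theorem norm_comp_subtypeL_eq_norm_starProjection (U : Submodule 𝕜 E) [U.HasOrthogonalProjection]
    (f : StrongDual 𝕜 E) :
    ‖f.comp U.subtypeL‖ = ‖U.starProjection ((toDual 𝕜 E).symm f)‖ := by
  have hf : f.comp U.subtypeL = toDualMap 𝕜 U (U.orthogonalProjectionOnto ((toDual 𝕜 E).symm f)) := by
    ext u
    rw [toDualMap_apply_apply, Submodule.coe_inner, ← U.starProjection_apply,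
      U.inner_starProjection_left_eq_right, U.starProjection_eq_self_iff.mpr u.2, toDual_symm_apply]
    rfl
  rw [hf, LinearIsometry.norm_map, U.starProjection_apply, Submodule.coe_norm]

theorem infDist_toDual_image_eq_norm_comp_orthogonal (K : Submodule 𝕜 E) [K.HasOrthogonalProjection]
    (f : StrongDual 𝕜 E) :
    infDist f (toDual 𝕜 E '' K) = ‖f.comp Kᗮ.subtypeL‖ := by
  obtain ⟨y, rfl⟩ := (toDual 𝕜 E).surjective f
  rw [infDist_image (toDual 𝕜 E).isometry, norm_comp_subtypeL_eq_norm_starProjection,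
    LinearIsometryEquiv.symm_apply_apply, K.starProjection_orthogonal_val,
    K.starProjection_minimal, infDist_eq_iInf]
  simp only [dist_eq_norm]
  rfl

theorem coe_span_range_eq_toDual_image {ι : Type*} (lam : ι → StrongDual 𝕜 E) :
    (Submodule.span 𝕜 (range lam) : Set (StrongDual 𝕜 E)) =
      toDual 𝕜 E '' Submodule.span 𝕜 (range ((toDual 𝕜 E).symm ∘ lam)) := by
  have h := Submodule.map_span (toDual 𝕜 E).toLinearEquiv.toLinearMap
    (range ((toDual 𝕜 E).symm ∘ lam))
  rw [← range_comp, ← Function.comp_assoc] at h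
  simp only [LinearEquiv.coe_coe, LinearIsometryEquiv.coe_toLinearEquiv,
    LinearIsometryEquiv.self_comp_symm, Function.id_comp] at h
  rw [← h, Submodule.map_coe]
  rfl

end Dual

theorem rho_le_CWP_sigma_general
    {H : Type*} [NormedAddCommGroup H] [InnerProductSpace ℝ H] [CompleteSpace H]
    (Λ M : Set (StrongDual ℝ H)) (hMcpt : IsCompact M)
    (pWP : H → ℝ) (C : ℝ) (hC : 0 < C)
    (hWPeq : ∀ u : H, pWP u = ⨆ μ : M, |(μ : StrongDual ℝ H) u|)
    (hWP : ∀ u : H, pWP u ≤ C * ⨆ l : Λ, |(l : StrongDual ℝ H) u|)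
    {N : ℕ} (lam : Fin N → StrongDual ℝ H) :
    (⨆ μ : M, infDist (μ : StrongDual ℝ H)
        ((Submodule.span ℝ (Set.range lam) : Submodule ℝ (StrongDual ℝ H)) : Set (StrongDual ℝ H))) ≤
      C * ⨆ l : Λ, infDist (l : StrongDual ℝ H)
        ((Submodule.span ℝ (Set.range lam) : Submodule ℝ (StrongDual ℝ H)) : Set (StrongDual ℝ H)) := by
  have : FiniteDimensional ℝ (Submodule.span ℝ (range ((toDual ℝ H).symm ∘ lam))) :=
    FiniteDimensional.span_of_finite ℝ (finite_range _)
  simp only [coe_span_range_eq_toDual_image, infDist_toDual_image_eq_norm_comp_orthogonal]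
  refine Real.iSup_le (fun μ => ?_) (mul_nonneg hC.le (Real.iSup_nonneg fun _ => by positivity))
  refine ContinuousLinearMap.norm_le_mul_iSup_norm_of_le_mul_iSup _ _ hC.le fun u => ?_
  have hμ := hMcpt.isBounded.norm_apply_le_iSup μ.2 (u : H)
  simp only [Real.norm_eq_abs, ← hWPeq] at hμ
  simpa [Real.norm_eq_abs] using hμ.trans (hWP u)

/-- Lemma rho–sigma: `ρ_{M,Λ_N} ≤ C_{WP} σ_{Λ_N}`. -/
theorem rho_le_CWP_sigma
    {H : Type*} [NormedAddCommGroup H] [InnerProductSpace ℝ H] [CompleteSpace H]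
    (Λ M : Set (StrongDual ℝ H)) (hMcpt : IsCompact M)
    (pWP : H → ℝ) (C : ℝ) (hC : 0 < C)
    (hWPeq : ∀ u : H, pWP u = ⨆ μ : M, |(μ : StrongDual ℝ H) u|)
    (hWP : ∀ u : H, pWP u ≤ C * ⨆ l : Λ, |(l : StrongDual ℝ H) u|)
    {N : ℕ} (lam : Fin N → StrongDual ℝ H) (hsub : Set.range lam ⊆ Λ) :
    (⨆ μ : M, infDist (μ : StrongDual ℝ H)
        ((Submodule.span ℝ (Set.range lam) : Submodule ℝ (StrongDual ℝ H)) : Set (StrongDual ℝ H))) ≤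
      C * ⨆ l : Λ, infDist (l : StrongDual ℝ H)
        ((Submodule.span ℝ (Set.range lam) : Submodule ℝ (StrongDual ℝ H)) : Set (StrongDual ℝ H)) :=
  rho_le_CWP_sigma_general Λ M hMcpt pWP C hC hWPeq hWP lam
end
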